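/- Let d = 2. For every real p with 1 < p < log 10 / log 5, there do not exist constants σ > 0 and c_1, c_2 > 0 such that c_1 σ^{−m} ≤ E_{p,m}(Q, Γ(Q)^c) ≤ c_2 σ^{−m} holds for every n ≥ 1, every m ≥ 0 and every Q ∈ Q_n^(2)(F^(2)). (Failure of property (A_p) for the planar fractal F^(2).) -/

import Mathlib

open Set MeasureTheory Filter
open scoped Classical

noncomputable section

/-- Points of `ℝ^d` with the Euclidean metric. -/
abbrev Pt (d : ℕ) := EuclideanSpace ℝ (Fin d)

/-- The closed cube `∏ [(lᵢ-1)/5ⁿ, lᵢ/5ⁿ]`. -/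
def cube (d n : ℕ) (l : Fin d → ℕ) : Set (Pt d) :=
  {x | ∀ i, ((l i : ℝ) - 1) / 5 ^ n ≤ x i ∧ x i ≤ (l i : ℝ) / 5 ^ n}

/-- The collection `𝒬ₙ⁽ᵈ⁾` of level-`n` cubes. -/
def Qcol (d n : ℕ) : Set (Set (Pt d)) :=
  {Q | ∃ l : Fin d → ℕ, (∀ i, 1 ≤ l i ∧ l i ≤ 5 ^ n) ∧ Q = cube d n l}

/-- `𝒬ₙ⁽ᵈ⁾(A)`: the level-`n` cubes whose interior meets `A`. -/
def QcolOf (d n : ℕ) (A : Set (Pt d)) : Set (Set (Pt d)) :=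
  {Q | Q ∈ Qcol d n ∧ (interior Q ∩ A).Nonempty}

/-- `F₀⁽ᵈ⁾ = [0,1]^d`. -/
def F0 (d : ℕ) : Set (Pt d) := {x | ∀ i, x i ∈ Icc (0 : ℝ) 1}

/-- `F₁⁽ᵈ⁾`. -/
def F1 (d : ℕ) : Set (Pt d) :=
  F0 d \ ⋃ i : Fin d, {x | (∀ j, j < i → x j ∈ Ioo (2/5 : ℝ) (3/5)) ∧
    x i ∈ Ioo (1/5 : ℝ) (2/5) ∪ Ioo (3/5 : ℝ) (4/5) ∧
    ∀ j, i < j → x j ∈ Ioo (2/5 : ℝ) (3/5)}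

/-- The orientation-preserving affine map from `[0,1]^d` onto the cube indexed by `l` at
level `n`. -/
def psi (d n : ℕ) (l : Fin d → ℕ) (x : Pt d) : Pt d :=
  WithLp.toLp 2 (fun i => ((l i : ℝ) - 1) / 5 ^ n + x i / 5 ^ n)

/-- The approximations `Fₙ⁽ᵈ⁾`. -/
def Fn (d : ℕ) : ℕ → Set (Pt d)
  | 0 => F0 d
  | 1 => F1 d
  | n + 2 => ⋃ l ∈ {l : Fin d → ℕ | cube d 1 l ∈ QcolOf d 1 (F1 d)}, psi d 1 l '' Fn d (n + 1)

/-- The fractal `F⁽ᵈ⁾`. -/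
def Fset (d : ℕ) : Set (Pt d) := ⋂ n, Fn d n

/-- `G₁⁽ᵈ⁾`: union of the level-1 cubes of `F₁⁽ᵈ⁾` which meet the boundary of `[0,1]^d`. -/
def G1 (d : ℕ) : Set (Pt d) :=
  ⋃ Q ∈ {Q | Q ∈ QcolOf d 1 (F1 d) ∧ (Q ∩ frontier (F0 d)).Nonempty}, Q

/-- The approximations `Gₙ⁽ᵈ⁾`. -/
def Gn (d : ℕ) : ℕ → Set (Pt d)
  | 0 => F0 d
  | 1 => G1 d
  | n + 2 => ⋃ l ∈ {l : Fin d → ℕ | cube d 1 l ∈ QcolOf d 1 (G1 d)}, psi d 1 l '' Gn d (n + 1)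

/-- The boundary fractal `G⁽ᵈ⁾ = [0,1]^d ∩ ⋂_{n ≥ 1} Gₙ⁽ᵈ⁾`. -/
def Gset (d : ℕ) : Set (Pt d) := F0 d ∩ ⋂ n, ⋂ (_ : 1 ≤ n), Gn d n

/-- The discrete `p`-energy `𝓔ₚⁿ(f)` on the level-`n` cubes of `F⁽ᵈ⁾`. -/
def energy (d n : ℕ) (p : ℝ) (f : Set (Pt d) → ℝ) : ℝ :=
  (1 / 2) * ∑' Q : QcolOf d n (Fset d), ∑' Q' : QcolOf d n (Fset d),
    if ((Q : Set (Pt d)) ∩ (Q' : Set (Pt d))).Nonempty then |f Q - f Q'| ^ p else 0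

/-- `Sᵐ(A)`: level-`(n+m)` cubes of `F⁽ᵈ⁾` contained in some cube of `A`. -/
def Sm (d n m : ℕ) (A : Set (Set (Pt d))) : Set (Set (Pt d)) :=
  {Q | Q ∈ QcolOf d (n + m) (Fset d) ∧ ∃ Q' ∈ A, Q ⊆ Q'}

/-- The effective `p`-conductance `𝓔_{p,m}(A₁, A₂)`. -/
def conduct (d n m : ℕ) (p : ℝ) (A₁ A₂ : Set (Set (Pt d))) : ℝ :=
  sInf {e : ℝ | ∃ f : Set (Pt d) → ℝ,
    (∀ Q ∈ Sm d n m A₁, f Q = 1) ∧ (∀ Q ∈ Sm d n m A₂, f Q = 0) ∧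
    e = energy d (n + m) p f}

/-- `Γ(Q)`: level-`n` cubes of `F⁽ᵈ⁾` meeting `Q`. -/
def Gam (d n : ℕ) (Q : Set (Pt d)) : Set (Set (Pt d)) :=
  {Q' | Q' ∈ QcolOf d n (Fset d) ∧ (Q' ∩ Q).Nonempty}

/-- `Γ(Q)ᶜ = 𝒬ₙ⁽ᵈ⁾(F⁽ᵈ⁾) \ Γ(Q)`. -/
def GamC (d n : ℕ) (Q : Set (Pt d)) : Set (Set (Pt d)) :=
  QcolOf d n (Fset d) \ Gam d n Q

/-- The corner cube `[0, 1/5]^d`. -/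
def Qone (d : ℕ) : Set (Pt d) := {x | ∀ i, x i ∈ Icc (0 : ℝ) (1/5)}

/-- The center cube `[2/5, 3/5]^d`. -/
def Qtwo (d : ℕ) : Set (Pt d) := {x | ∀ i, x i ∈ Icc (2/5 : ℝ) (3/5)}

end

/-!
Testing the central cube `Qtwo = [2/5, 3/5]²` with its indicator function bounds its conductance
by `4` at every depth `m`: its four side neighbours are removed cells, so only the four corner
contacts carry energy. The lower half of (A_p) then forces `σ ≥ 1`. On the other hand the corner
cube `Qone = [0, 1/5]²` is joined to `[2/5, 3/5] × [0, 1/5]`, which lies in `Γ(Qone)ᶜ`, by `2^m`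
disjoint horizontal chains of level-`(m+1)` cubes, one along each row whose base-`5` digits are
all `0` or `4`. Each chain has `5^m + 1` links, so by Hölder it carries energy at least
`(5^m + 1)^(1-p)`, and the conductance of `Qone` is at least `2^(m-1) (5^m + 1)^(1-p)`. This grows
like `(2 · 5^(1-p))^m`, which is unbounded exactly when `p < log 10 / log 5`, contradicting the
upper half of (A_p) with `σ ≥ 1`.
-/

section CubeGeometry

variable {d : ℕ}

lemma mem_cube_iff {N : ℕ} {l : Fin d → ℕ} {x : Pt d} :
    x ∈ cube d N l ↔ ∀ i, (l i : ℝ) - 1 ≤ 5 ^ N * x i ∧ 5 ^ N * x i ≤ l i := by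
  have h5 : (0 : ℝ) < 5 ^ N := by positivity
  simp only [cube, Set.mem_ofPred_eq, div_le_iff₀' h5, le_div_iff₀' h5]

lemma interior_cube (N : ℕ) (l : Fin d → ℕ) :
    interior (cube d N l) =
      {x | ∀ i, ((l i : ℝ) - 1) / 5 ^ N < x i ∧ x i < (l i : ℝ) / 5 ^ N} := by
  have hcube : cube d N l = (EuclideanSpace.equiv (Fin d) ℝ).toHomeomorph ⁻¹'
      Set.univ.pi fun i => Icc (((l i : ℝ) - 1) / 5 ^ N) ((l i : ℝ) / 5 ^ N) := by
    ext x; simp only [cube, Set.mem_ofPred_eq, Set.mem_preimage, Set.mem_univ_pi, Set.mem_Icc]; rfl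
  rw [hcube, ← Homeomorph.preimage_interior, interior_pi_set Set.finite_univ]
  ext x; simp

lemma psi_mem_interior_cube {n : ℕ} (l : Fin d → ℕ) {y : Pt d} (hy : ∀ i, y i ∈ Ioo 0 1) :
    psi d n l y ∈ interior (cube d n l) := by
  rw [interior_cube]
  intro i
  have h5 : (0 : ℝ) < 5 ^ n := by positivity
  obtain ⟨h0, h1⟩ := hy i
  simp only [psi, PiLp.toLp_apply]
  constructor
  · rw [lt_add_iff_pos_right]; positivity
  · rw [← add_div, div_lt_div_iff_of_pos_right h5]; linarith

noncomputable def cubeCenter (d N : ℕ) (l : Fin d → ℕ) : Pt d :=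
  psi d N l (WithLp.toLp 2 fun _ => 1 / 2)

lemma cubeCenter_mem_interior (N : ℕ) (l : Fin d → ℕ) :
    cubeCenter d N l ∈ interior (cube d N l) :=
  psi_mem_interior_cube l fun _ => by norm_num

lemma cubeCenter_mem (N : ℕ) (l : Fin d → ℕ) : cubeCenter d N l ∈ cube d N l :=
  interior_subset (cubeCenter_mem_interior N l)

lemma five_pow_mul_cubeCenter (N : ℕ) (l : Fin d → ℕ) (i : Fin d) :
    5 ^ N * cubeCenter d N l i = l i - 1 / 2 := by
  simp only [cubeCenter, psi, PiLp.toLp_apply]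
  field_simp
  ring

lemma cube_injective (N : ℕ) : Function.Injective (cube d N) := by
  intro l l' h
  funext i
  have hc := (mem_cube_iff.1 (h ▸ cubeCenter_mem N l) i)
  rw [five_pow_mul_cubeCenter] at hc
  have h1 : l' i < l i + 1 := by exact_mod_cast (by linarith [hc.1] : (l' i : ℝ) < l i + 1)
  have h2 : l i < l' i + 1 := by exact_mod_cast (by linarith [hc.2] : (l i : ℝ) < l' i + 1)
  omega

lemma cube_inter_cube_nonempty_iff {N : ℕ} {l l' : Fin d → ℕ} :
    (cube d N l ∩ cube d N l').Nonempty ↔ ∀ i, l i ≤ l' i + 1 ∧ l' i ≤ l i + 1 := by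
  constructor
  · rintro ⟨x, hx, hx'⟩ i
    have h := (mem_cube_iff.1 hx i)
    have h' := (mem_cube_iff.1 hx' i)
    constructor
    · exact_mod_cast (by linarith [h.1, h'.2] : (l i : ℝ) ≤ l' i + 1)
    · exact_mod_cast (by linarith [h.2, h'.1] : (l' i : ℝ) ≤ l i + 1)
  · intro h
    set x : Pt d := WithLp.toLp 2 fun i => (((max (l i) (l' i) : ℕ) : ℝ) - 1) / 5 ^ N
    have hx : ∀ k : Fin d → ℕ, (∀ i, k i ≤ max (l i) (l' i) ∧ max (l i) (l' i) ≤ k i + 1) →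
        x ∈ cube d N k := by
      intro k hk
      refine mem_cube_iff.2 fun i => ?_
      have h5 : (5 : ℝ) ^ N ≠ 0 := by positivity
      have h1 : (k i : ℝ) ≤ (max (l i) (l' i) : ℕ) := by exact_mod_cast (hk i).1
      have h2 : ((max (l i) (l' i) : ℕ) : ℝ) ≤ k i + 1 := by exact_mod_cast (hk i).2
      simp only [x, mul_div_cancel₀ _ h5]
      constructor <;> linarith
    exact ⟨x, hx l fun i => by have := h i; omega, hx l' fun i => by have := h i; omega⟩

lemma cube_subset_cube_iff {n m : ℕ} {l L : Fin d → ℕ} :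
    cube d (n + m) l ⊆ cube d n L ↔ ∀ i, L i * 5 ^ m + 1 ≤ l i + 5 ^ m ∧ l i ≤ L i * 5 ^ m := by
  have h5m : (0 : ℝ) < 5 ^ m := by positivity
  have hscale : ∀ x : ℝ, 5 ^ (n + m) * x = 5 ^ m * (5 ^ n * x) := fun x => by ring
  constructor
  · intro h i
    have hc := mem_cube_iff.1 (h (cubeCenter_mem (n + m) l)) i
    have hl := five_pow_mul_cubeCenter (n + m) l i
    rw [hscale] at hl
    obtain ⟨h1, h2⟩ := hc
    constructor
    · have : ((L i : ℝ) - 1) * 5 ^ m < l i := by nlinarith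
      exact_mod_cast (by push_cast; nlinarith : ((L i * 5 ^ m : ℕ) : ℝ) < l i + 5 ^ m)
    · have : (l i : ℝ) < L i * 5 ^ m + 1 := by nlinarith
      exact Nat.lt_succ_iff.1 (by exact_mod_cast this)
  · intro h x hx
    refine mem_cube_iff.2 fun i => ?_
    obtain ⟨h1, h2⟩ := mem_cube_iff.1 hx i
    rw [hscale] at h1 h2
    have hL1 : (L i : ℝ) * 5 ^ m + 1 ≤ l i + 5 ^ m := by exact_mod_cast (h i).1
    have hL2 : (l i : ℝ) ≤ L i * 5 ^ m := by exact_mod_cast (h i).2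
    constructor <;> nlinarith

lemma cubeCenter_mem_Ioo {N : ℕ} {l : Fin d → ℕ} (hl : ∀ i, 1 ≤ l i ∧ l i ≤ 5 ^ N) (i : Fin d) :
    cubeCenter d N l i ∈ Ioo 0 1 := by
  have h := five_pow_mul_cubeCenter N l i
  have h1 : (1 : ℝ) ≤ l i := by exact_mod_cast (hl i).1
  have h2 : (l i : ℝ) ≤ 5 ^ N := by exact_mod_cast (hl i).2
  constructor <;> nlinarith [pow_pos (by norm_num : (0 : ℝ) < 5) N]

lemma psi_succ {M : ℕ} {l : Fin d → ℕ} (hl : ∀ i, 1 ≤ l i) (y : Pt d) :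
    psi d (M + 1) l y =
      psi d 1 (fun i => (l i - 1) / 5 ^ M + 1) (psi d M (fun i => (l i - 1) % 5 ^ M + 1) y) := by
  ext i
  have hdiv : ((l i : ℝ) - 1) = 5 ^ M * ((l i - 1) / 5 ^ M : ℕ) + ((l i - 1) % 5 ^ M : ℕ) := by
    rw [← Nat.cast_one, ← Nat.cast_sub (hl i)]
    exact_mod_cast (Nat.div_add_mod _ _).symm
  simp only [psi, PiLp.toLp_apply, Nat.cast_add, Nat.cast_one, add_sub_cancel_right]
  rw [hdiv]
  field_simp
  ring

end CubeGeometry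

lemma abs_sub_rpow_le_mul_sum {p : ℝ} (hp : 1 ≤ p) (g : ℕ → ℝ) (K : ℕ) :
    |g 0 - g K| ^ p ≤ (K : ℝ) ^ (p - 1) * ∑ j ∈ Finset.range K, |g j - g (j + 1)| ^ p := by
  calc |g 0 - g K| ^ p = |∑ j ∈ Finset.range K, (g j - g (j + 1))| ^ p := by
        rw [Finset.sum_range_sub']
    _ ≤ (∑ j ∈ Finset.range K, |g j - g (j + 1)|) ^ p := by
        gcongr; exact Finset.abs_sum_le_sum_abs _ _
    _ ≤ _ := by
        simpa using
          Real.rpow_sum_le_const_mul_sum_rpow (Finset.range K) (fun j => g j - g (j + 1)) hp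

section Conductance

variable {d : ℕ}

lemma QcolOf_finite (d n : ℕ) (A : Set (Pt d)) : (QcolOf d n A).Finite := by
  refine ((Set.Finite.pi fun _ => Set.finite_Iic (5 ^ n)).image (cube d n)).subset ?_
  rintro Q ⟨⟨l, hl, rfl⟩, -⟩
  exact ⟨l, fun i _ => (hl i).2, rfl⟩

noncomputable def cubesF (d n : ℕ) : Finset (Set (Pt d)) := (QcolOf_finite d n (Fset d)).toFinset

lemma mem_cubesF {n : ℕ} {Q : Set (Pt d)} : Q ∈ cubesF d n ↔ Q ∈ QcolOf d n (Fset d) :=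
  Set.Finite.mem_toFinset _

noncomputable def pairEnergy (p : ℝ) (f : Set (Pt d) → ℝ) (Q Q' : Set (Pt d)) : ℝ :=
  if (Q ∩ Q').Nonempty then |f Q - f Q'| ^ p else 0

lemma pairEnergy_nonneg (p : ℝ) (f : Set (Pt d) → ℝ) (Q Q' : Set (Pt d)) :
    0 ≤ pairEnergy p f Q Q' := by
  unfold pairEnergy; split_ifs <;> positivity

lemma energy_eq_sum (n : ℕ) (p : ℝ) (f : Set (Pt d) → ℝ) :
    energy d n p f = 1 / 2 * ∑ x ∈ cubesF d n ×ˢ cubesF d n, pairEnergy p f x.1 x.2 := by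
  have hcoe : (↑(cubesF d n) : Set (Set (Pt d))) = QcolOf d n (Fset d) :=
    Set.Finite.coe_toFinset _
  rw [Finset.sum_product, energy, ← hcoe, ← Finset.tsum_subtype']
  simp only [← Finset.tsum_subtype' (cubesF d n)]
  rfl

lemma energy_nonneg (n : ℕ) (p : ℝ) (f : Set (Pt d) → ℝ) : 0 ≤ energy d n p f := by
  rw [energy_eq_sum]
  exact mul_nonneg (by norm_num) (Finset.sum_nonneg fun x _ => pairEnergy_nonneg p f x.1 x.2)

variable {n m : ℕ} {p : ℝ} {A₁ A₂ : Set (Set (Pt d))}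

lemma conduct_le_energy {f : Set (Pt d) → ℝ} (hf₁ : ∀ Q ∈ Sm d n m A₁, f Q = 1)
    (hf₂ : ∀ Q ∈ Sm d n m A₂, f Q = 0) : conduct d n m p A₁ A₂ ≤ energy d (n + m) p f :=
  csInf_le ⟨0, by rintro e ⟨g, -, -, rfl⟩; exact energy_nonneg _ _ _⟩ ⟨f, hf₁, hf₂, rfl⟩

lemma conduct_le_energy_indicator (h : Disjoint (Sm d n m A₁) (Sm d n m A₂)) :
    conduct d n m p A₁ A₂ ≤ energy d (n + m) p ((Sm d n m A₁).indicator 1) :=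
  conduct_le_energy (fun _ hQ => Set.indicator_of_mem hQ 1)
    (fun _ hQ => Set.indicator_of_notMem (h.notMem_of_mem_right hQ) 1)

lemma le_conduct {b : ℝ} (h : Disjoint (Sm d n m A₁) (Sm d n m A₂))
    (hb : ∀ f : Set (Pt d) → ℝ, (∀ Q ∈ Sm d n m A₁, f Q = 1) → (∀ Q ∈ Sm d n m A₂, f Q = 0) →
      b ≤ energy d (n + m) p f) :
    b ≤ conduct d n m p A₁ A₂ := by
  refine le_csInf ⟨_, (Sm d n m A₁).indicator 1, fun _ hQ => Set.indicator_of_mem hQ 1,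
    fun _ hQ => Set.indicator_of_notMem (h.notMem_of_mem_right hQ) 1, rfl⟩ ?_
  rintro e ⟨f, hf₁, hf₂, rfl⟩
  exact hb f hf₁ hf₂

lemma disjoint_Sm_singleton_GamC (Q : Set (Pt d)) :
    Disjoint (Sm d n m {Q}) (Sm d n m (GamC d n Q)) := by
  refine Set.disjoint_left.2 ?_
  rintro R ⟨⟨⟨l, -, rfl⟩, -⟩, _, rfl, hRQ⟩ ⟨-, Q', ⟨hQ', hQ'Γ⟩, hRQ'⟩
  exact hQ'Γ ⟨hQ', cubeCenter _ _ l, hRQ' (cubeCenter_mem _ l), hRQ (cubeCenter_mem _ l)⟩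

lemma energy_le_card_div_two (hp : 0 < p) {f : Set (Pt d) → ℝ} (hf : ∀ Q Q', |f Q - f Q'| ≤ 1)
    (T : Finset (Set (Pt d) × Set (Pt d)))
    (hT : ∀ Q ∈ QcolOf d n (Fset d), ∀ Q' ∈ QcolOf d n (Fset d),
      (Q ∩ Q').Nonempty → f Q ≠ f Q' → (Q, Q') ∈ T) :
    energy d n p f ≤ T.card / 2 := by
  have hle : ∀ x ∈ cubesF d n ×ˢ cubesF d n,
      pairEnergy p f x.1 x.2 ≤ if x ∈ T then 1 else 0 := by
    rintro ⟨Q, Q'⟩ hx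
    rw [Finset.mem_product, mem_cubesF, mem_cubesF] at hx
    unfold pairEnergy
    split_ifs with hQQ' hmem
    · exact Real.rpow_le_one (abs_nonneg _) (hf Q Q') hp.le
    · have : f Q = f Q' := by_contra fun hne => hmem (hT Q hx.1 Q' hx.2 hQQ' hne)
      simp [this, Real.zero_rpow hp.ne']
    · exact zero_le_one
    · rfl
  calc energy d n p f ≤ 1 / 2 * ∑ x ∈ cubesF d n ×ˢ cubesF d n, if x ∈ T then 1 else 0 := by
        rw [energy_eq_sum]; gcongr with x hx; exact hle x hx
    _ ≤ T.card / 2 := by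
        rw [Finset.sum_boole, Finset.filter_mem_eq_inter, one_div_mul_eq_div]
        gcongr
        exact Finset.inter_subset_right

lemma le_energy_of_paths (hp : 1 ≤ p) {ι : Type*} [Fintype ι] {K : ℕ} (hK : 0 < K)
    (γ : ι → ℕ → Set (Pt d)) (hγ : ∀ s, ∀ j ≤ K, γ s j ∈ QcolOf d n (Fset d))
    (hadj : ∀ s j, (γ s j ∩ γ s (j + 1)).Nonempty) (hinj : Function.Injective (Function.uncurry γ))
    {f : Set (Pt d) → ℝ} (h₀ : ∀ s, f (γ s 0) = 1) (h₁ : ∀ s, f (γ s K) = 0) :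
    Fintype.card ι * (K : ℝ) ^ (1 - p) / 2 ≤ energy d n p f := by
  have hpath : ∀ s, (K : ℝ) ^ (1 - p) ≤
      ∑ j ∈ Finset.range K, pairEnergy p f (γ s j) (γ s (j + 1)) := by
    intro s
    have h := abs_sub_rpow_le_mul_sum hp (fun j => f (γ s j)) K
    simp only [h₀, h₁, sub_zero, abs_one, Real.one_rpow] at h
    rw [show 1 - p = -(p - 1) by ring, Real.rpow_neg (Nat.cast_nonneg K),
      inv_le_iff_one_le_mul₀' (by positivity)]
    simpa only [pairEnergy, if_pos (hadj s _)] using h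
  set e : ι × ℕ → Set (Pt d) × Set (Pt d) := fun x => (γ x.1 x.2, γ x.1 (x.2 + 1))
  have he : Set.InjOn e ↑(Finset.univ ×ˢ Finset.range K : Finset (ι × ℕ)) :=
    fun x _ y _ hxy => hinj (congrArg Prod.fst hxy)
  have himage : (Finset.univ ×ˢ Finset.range K).image e ⊆ cubesF d n ×ˢ cubesF d n := by
    simp only [Finset.subset_iff, Finset.mem_image, Finset.mem_product, Finset.mem_range,
      mem_cubesF]
    rintro _ ⟨⟨s, j⟩, ⟨-, hj⟩, rfl⟩
    exact ⟨hγ s j hj.le, hγ s (j + 1) hj⟩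
  calc Fintype.card ι * (K : ℝ) ^ (1 - p) / 2 = 1 / 2 * ∑ _s : ι, (K : ℝ) ^ (1 - p) := by
        rw [Finset.sum_const, Finset.card_univ, nsmul_eq_mul]; ring
    _ ≤ 1 / 2 * ∑ s : ι, ∑ j ∈ Finset.range K, pairEnergy p f (γ s j) (γ s (j + 1)) := by
        gcongr with s; exact hpath s
    _ = 1 / 2 * ∑ x ∈ (Finset.univ ×ˢ Finset.range K).image e, pairEnergy p f x.1 x.2 := by
        rw [Finset.sum_image he, Finset.sum_product]
    _ ≤ energy d n p f := by
        rw [energy_eq_sum]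
        gcongr 1 / 2 * ?_
        exact Finset.sum_le_sum_of_subset_of_nonneg himage fun x _ _ => pairEnergy_nonneg p f _ _

end Conductance

section Fractal

def digit (k n : ℕ) : ℕ := n / 5 ^ k % 5

lemma digit_mod_pow {k M : ℕ} (h : k < M) (n : ℕ) : digit k (n % 5 ^ M) = digit k n := by
  obtain ⟨j, rfl⟩ := Nat.exists_eq_add_of_lt h
  rw [digit, digit, show 5 ^ (k + j + 1) = 5 ^ k * (5 ^ j * 5) by ring,
    Nat.mod_mul_right_div_self, Nat.mod_mod_of_dvd _ (dvd_mul_left 5 _)]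

lemma digit_zero_div_pow (M n : ℕ) : digit 0 (n / 5 ^ M) = digit M n := by
  simp [digit]

/-- `(a, b)` is one of the four cells of the `5 × 5` grid removed from `[0,1]²` to form `F₁⁽²⁾`;
cells are indexed from `0`, so `(a, b)` is `[a/5, (a+1)/5] × [b/5, (b+1)/5]`. -/
def IsRemovedCell (a b : ℕ) : Prop := (a = 1 ∨ a = 3) ∧ b = 2 ∨ a = 2 ∧ (b = 1 ∨ b = 3)

/-- Digit `k` of `lᵢ - 1` locates the ancestor of generation `N - k` of the level-`N` cube
`cube 2 N l` inside its parent. -/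
def IsAdmissible (N : ℕ) (l : Fin 2 → ℕ) : Prop :=
  (∀ i, 1 ≤ l i ∧ l i ≤ 5 ^ N) ∧
    ∀ k < N, ¬ IsRemovedCell (digit k (l 0 - 1)) (digit k (l 1 - 1))

lemma isAdmissible_one_iff {a : Fin 2 → ℕ} :
    IsAdmissible 1 a ↔ (∀ i, 1 ≤ a i ∧ a i ≤ 5) ∧ ¬ IsRemovedCell (a 0 - 1) (a 1 - 1) := by
  simp only [IsAdmissible, pow_one, Nat.lt_one_iff, forall_eq]
  refine and_congr_right fun h => ?_
  have h0 := h 0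
  have h1 := h 1
  rw [digit, digit, pow_zero, Nat.div_one, Nat.div_one, Nat.mod_eq_of_lt (by omega),
    Nat.mod_eq_of_lt (by omega)]

variable {N M : ℕ} {l : Fin 2 → ℕ}

lemma IsAdmissible.head (h : IsAdmissible (M + 1) l) :
    IsAdmissible 1 (fun i => (l i - 1) / 5 ^ M + 1) := by
  refine ⟨fun i => ⟨Nat.le_add_left _ _, ?_⟩, fun k hk => ?_⟩
  · have := (h.1 i).2
    rw [pow_one, Nat.add_one_le_iff, Nat.div_lt_iff_lt_mul (by positivity)]
    rw [pow_succ] at this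
    have := Nat.one_le_pow M 5 (by norm_num)
    omega
  · obtain rfl : k = 0 := by omega
    simpa only [add_tsub_cancel_right, digit_zero_div_pow] using h.2 M (by omega)

lemma IsAdmissible.tail (h : IsAdmissible (M + 1) l) :
    IsAdmissible M (fun i => (l i - 1) % 5 ^ M + 1) := by
  refine ⟨fun i => ⟨Nat.le_add_left _ _, Nat.mod_lt _ (by positivity)⟩, fun k hk => ?_⟩
  simpa only [add_tsub_cancel_right, digit_mod_pow hk] using h.2 k (by omega)

lemma psi_one_mem_F1 {a : Fin 2 → ℕ} (ha : IsAdmissible 1 a) {y : Pt 2}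
    (hy : ∀ i, y i ∈ Ioo 0 1) : psi 2 1 a y ∈ F1 2 := by
  rw [isAdmissible_one_iff] at ha
  obtain ⟨hrange, hkeep⟩ := ha
  have hcoord : ∀ i, psi 2 1 a y i = ((a i : ℝ) - 1 + y i) / 5 := fun i => by
    simp only [psi, PiLp.toLp_apply, pow_one]; ring
  have hcell : ∀ i (t : ℕ), (t : ℝ) / 5 < psi 2 1 a y i → psi 2 1 a y i < ((t : ℝ) + 1) / 5 →
      a i - 1 = t := by
    intro i t hlo hhi
    rw [hcoord] at hlo hhi
    have := hy i
    have h1 : t < a i := by exact_mod_cast (by linarith [this.2] : (t : ℝ) < a i)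
    have h2 : a i < t + 2 := by exact_mod_cast (by linarith [this.1] : (a i : ℝ) < t + 2)
    omega
  refine ⟨fun i => ?_, ?_⟩
  · have h1 : (1 : ℝ) ≤ a i := by exact_mod_cast (hrange i).1
    have h2 : (a i : ℝ) ≤ 5 := by exact_mod_cast (hrange i).2
    have := hy i
    rw [hcoord]
    constructor
    · exact div_nonneg (by linarith [this.1]) (by norm_num)
    · rw [div_le_one (by norm_num)]; linarith [this.2]
  · simp only [Set.mem_iUnion, Set.mem_ofPred_eq, Set.mem_union, Set.mem_Ioo]
    rintro ⟨i, hbefore, hi, hafter⟩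
    have hmid : ∀ j, 2 / 5 < psi 2 1 a y j ∧ psi 2 1 a y j < 3 / 5 → a j - 1 = 2 :=
      fun j h => hcell j 2 (by push_cast; linarith [h.1]) (by push_cast; linarith [h.2])
    have hside : ∀ j, (1 / 5 < psi 2 1 a y j ∧ psi 2 1 a y j < 2 / 5) ∨
        (3 / 5 < psi 2 1 a y j ∧ psi 2 1 a y j < 4 / 5) → a j - 1 = 1 ∨ a j - 1 = 3 := by
      rintro j (h | h)
      · exact Or.inl (hcell j 1 (by push_cast; linarith [h.1]) (by push_cast; linarith [h.2]))
      · exact Or.inr (hcell j 3 (by push_cast; linarith [h.1]) (by push_cast; linarith [h.2]))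
    apply hkeep
    fin_cases i
    · exact Or.inl ⟨hside 0 hi, hmid 1 (hafter 1 (by decide))⟩
    · exact Or.inr ⟨hmid 0 (hbefore 0 (by decide)), hside 1 hi⟩

lemma IsAdmissible.exists_cubeCenter_eq_psi (h : IsAdmissible N l) :
    ∃ a M r, IsAdmissible 1 a ∧ IsAdmissible M r ∧
      cubeCenter 2 N l = psi 2 1 a (cubeCenter 2 M r) := by
  cases N with
  | zero =>
    refine ⟨fun _ => 3, 0, l, isAdmissible_one_iff.2 ⟨by simp, by simp [IsRemovedCell]⟩, h, ?_⟩
    ext i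
    have : l i = 1 := by have := h.1 i; simp at this; omega
    simp only [cubeCenter, psi, PiLp.toLp_apply, this]
    norm_num
  | succ M => exact ⟨_, M, _, h.head, h.tail, psi_succ (fun i => (h.1 i).1) _⟩

theorem cubeCenter_mem_Fn (K : ℕ) : ∀ {N l}, IsAdmissible N l → cubeCenter 2 N l ∈ Fn 2 K := by
  induction K with
  | zero =>
    intro N l h
    obtain ⟨a, M, r, ha, hr, heq⟩ := h.exists_cubeCenter_eq_psi
    rw [heq]
    exact (psi_one_mem_F1 ha (cubeCenter_mem_Ioo hr.1)).1
  | succ K ih =>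
    intro N l h
    obtain ⟨a, M, r, ha, hr, heq⟩ := h.exists_cubeCenter_eq_psi
    rw [heq]
    cases K with
    | zero => exact psi_one_mem_F1 ha (cubeCenter_mem_Ioo hr.1)
    | succ K =>
      have hcube : cube 2 1 a ∈ QcolOf 2 1 (F1 2) := ⟨⟨a, ha.1, rfl⟩, cubeCenter 2 1 a,
        cubeCenter_mem_interior 1 a, psi_one_mem_F1 ha fun _ => by norm_num⟩
      exact Set.mem_iUnion₂.2 ⟨a, hcube, _, ih hr, rfl⟩

lemma cube_mem_QcolOf_Fset (h : IsAdmissible N l) : cube 2 N l ∈ QcolOf 2 N (Fset 2) :=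
  ⟨⟨l, h.1, rfl⟩, cubeCenter 2 N l, cubeCenter_mem_interior N l,
    Set.mem_iInter.2 fun K => cubeCenter_mem_Fn K h⟩

lemma notMem_QcolOf_of_subset_removedCell {L : Fin 2 → ℕ} (hL : IsRemovedCell (L 0 - 1) (L 1 - 1))
    {Q : Set (Pt 2)} (hQ : Q ⊆ cube 2 1 L) : Q ∉ QcolOf 2 N (Fset 2) := by
  rintro ⟨-, x, hx, hxF⟩
  have hxL := interior_cube 1 L ▸ interior_mono hQ hx
  have hL1 : ∀ i, 1 ≤ L i := Fin.forall_fin_two.2 (by unfold IsRemovedCell at hL; omega)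
  have hcell : ∀ i (t : ℕ), L i - 1 = t → (t : ℝ) / 5 < x i ∧ x i < ((t : ℝ) + 1) / 5 := by
    intro i t ht
    have hLt : (L i : ℝ) = t + 1 := by exact_mod_cast (by have := hL1 i; omega : L i = t + 1)
    simpa [hLt] using hxL i
  have hmid : ∀ i, L i - 1 = 2 → 2 / 5 < x i ∧ x i < 3 / 5 := fun i h => by
    have := hcell i 2 h; norm_num at this; exact this
  have hside : ∀ i, L i - 1 = 1 ∨ L i - 1 = 3 →
      (1 / 5 < x i ∧ x i < 2 / 5) ∨ (3 / 5 < x i ∧ x i < 4 / 5) := by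
    rintro i (h | h)
    · left; have := hcell i 1 h; norm_num at this; exact this
    · right; have := hcell i 3 h; norm_num at this; exact this
  have hxF1 : x ∈ F1 2 := Set.mem_iInter.1 hxF 1
  refine hxF1.2 (Set.mem_iUnion.2 ?_)
  rcases hL with ⟨h0, h1⟩ | ⟨h0, h1⟩
  · refine ⟨0, fun j hj => absurd hj (Fin.not_lt_zero j), hside 0 h0, fun j hj => ?_⟩
    obtain rfl : j = 1 := by omega
    exact hmid 1 h1
  · refine ⟨1, fun j hj => ?_, hside 1 h1, fun j hj => absurd hj (by omega)⟩
    obtain rfl : j = 0 := by omega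
    exact hmid 0 h0

end Fractal

section CentralCube

variable {m : ℕ} {p : ℝ}

lemma Qtwo_eq (d : ℕ) : Qtwo d = cube d 1 (fun _ => 3) := by
  ext x
  simp only [Qtwo, cube, Set.mem_ofPred_eq, Set.mem_Icc]
  norm_num

lemma cube_subset_Qtwo_iff {d : ℕ} {l : Fin d → ℕ} :
    cube d (1 + m) l ⊆ Qtwo d ↔ ∀ i, 2 * 5 ^ m + 1 ≤ l i ∧ l i ≤ 3 * 5 ^ m := by
  rw [Qtwo_eq, cube_subset_cube_iff]
  exact forall_congr' fun i => by omega

def innerCorner (m : ℕ) (b : Fin 2 → Bool) : Fin 2 → ℕ :=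
  fun i => bif b i then 3 * 5 ^ m else 2 * 5 ^ m + 1

def outerCorner (m : ℕ) (b : Fin 2 → Bool) : Fin 2 → ℕ :=
  fun i => bif b i then 3 * 5 ^ m + 1 else 2 * 5 ^ m

/-- The central cube `Qtwo` is joined to the rest of `F⁽²⁾` only through its four corners: the
side neighbours of its boundary subcubes lie in removed cells. -/
lemma exists_corner_of_adjacent_Qtwo {l l' : Fin 2 → ℕ} (hl : cube 2 (1 + m) l ⊆ Qtwo 2)
    (hl' : cube 2 (1 + m) l' ∈ QcolOf 2 (1 + m) (Fset 2))
    (hout : ¬ cube 2 (1 + m) l' ⊆ Qtwo 2) (hadj : (cube 2 (1 + m) l ∩ cube 2 (1 + m) l').Nonempty) :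
    ∃ b, l = innerCorner m b ∧ l' = outerCorner m b := by
  rw [cube_subset_Qtwo_iff] at hl hout
  rw [cube_inter_cube_nonempty_iff] at hadj
  have h5 : 1 ≤ 5 ^ m := Nat.one_le_pow _ _ (by norm_num)
  set L : Fin 2 → ℕ := fun i => if l' i ≤ 2 * 5 ^ m then 2 else if l' i ≤ 3 * 5 ^ m then 3 else 4
  have hsub : cube 2 (1 + m) l' ⊆ cube 2 1 L := by
    rw [cube_subset_cube_iff]
    intro i
    have := hl i
    have := hadj i
    simp only [L]
    split_ifs <;> omega
  have hkeep : ¬ IsRemovedCell (L 0 - 1) (L 1 - 1) := fun hrem =>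
    notMem_QcolOf_of_subset_removedCell hrem hsub hl'
  have hext : ∀ i, ∃ β : Bool, l i = (bif β then 3 * 5 ^ m else 2 * 5 ^ m + 1) ∧
      l' i = (bif β then 3 * 5 ^ m + 1 else 2 * 5 ^ m) := by
    have h0 := hl 0; have h1 := hl 1; have a0 := hadj 0; have a1 := hadj 1
    rw [Fin.forall_fin_two] at hout
    simp only [L, IsRemovedCell] at hkeep
    refine Fin.forall_fin_two.2 ⟨?_, ?_⟩ <;>
    · split_ifs at hkeep <;>
      first
      | exact ⟨true, by simp only [cond_true]; omega⟩
      | exact ⟨false, by simp only [cond_false]; omega⟩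
  choose b hb using hext
  exact ⟨b, funext fun i => (hb i).1, funext fun i => (hb i).2⟩

lemma Qtwo_mem_QcolOf : Qtwo 2 ∈ QcolOf 2 1 (Fset 2) :=
  Qtwo_eq 2 ▸ cube_mem_QcolOf_Fset (isAdmissible_one_iff.2 ⟨by simp, by simp [IsRemovedCell]⟩)

lemma conduct_Qtwo_le (hp : 0 < p) (m : ℕ) :
    conduct 2 1 m p {Qtwo 2} (GamC 2 1 (Qtwo 2)) ≤ 4 := by
  set S := Sm 2 1 m {Qtwo 2}
  set f : Set (Pt 2) → ℝ := S.indicator 1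
  set C : Finset (Set (Pt 2) × Set (Pt 2)) := Finset.univ.image fun b =>
    (cube 2 (1 + m) (innerCorner m b), cube 2 (1 + m) (outerCorner m b))
  have hC : C.card ≤ 4 := Finset.card_image_le.trans (by simp)
  have hcross : ∀ Q ∈ QcolOf 2 (1 + m) (Fset 2), ∀ Q' ∈ QcolOf 2 (1 + m) (Fset 2),
      (Q ∩ Q').Nonempty → Q ∈ S → Q' ∉ S → (Q, Q') ∈ C := by
    rintro Q hQ Q' hQ' hQQ' ⟨-, _, rfl, hsub⟩ hQ'S
    obtain ⟨l, -, rfl⟩ := hQ.1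
    obtain ⟨l', -, rfl⟩ := hQ'.1
    obtain ⟨b, rfl, rfl⟩ :=
      exists_corner_of_adjacent_Qtwo hsub hQ' (fun h => hQ'S ⟨hQ', _, rfl, h⟩) hQQ'
    exact Finset.mem_image_of_mem _ (Finset.mem_univ b)
  have hT : ∀ Q ∈ QcolOf 2 (1 + m) (Fset 2), ∀ Q' ∈ QcolOf 2 (1 + m) (Fset 2),
      (Q ∩ Q').Nonempty → f Q ≠ f Q' → (Q, Q') ∈ C ∪ C.image Prod.swap := by
    intro Q hQ Q' hQ' hQQ' hne
    by_cases hS : Q ∈ S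
    · have hS' : Q' ∉ S := fun h => hne (by simp [f, hS, h])
      exact Finset.mem_union_left _ (hcross Q hQ Q' hQ' hQQ' hS hS')
    · have hS' : Q' ∈ S := by_contra fun h => hne (by simp [f, hS, h])
      refine Finset.mem_union_right _ (Finset.mem_image.2 ⟨(Q', Q), ?_, rfl⟩)
      exact hcross Q' hQ' Q hQ (Set.inter_comm Q Q' ▸ hQQ') hS' hS
  have hbound : ∀ Q Q', |f Q - f Q'| ≤ 1 := by
    intro Q Q'
    simp only [f, Set.indicator_apply, Pi.one_apply]
    split_ifs <;> norm_num
  calc conduct 2 1 m p {Qtwo 2} (GamC 2 1 (Qtwo 2))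
      ≤ energy 2 (1 + m) p f :=
        conduct_le_energy_indicator (disjoint_Sm_singleton_GamC _)
    _ ≤ (C ∪ C.image Prod.swap).card / 2 := energy_le_card_div_two hp hbound _ hT
    _ ≤ 4 := by
        have := (Finset.card_union_le C (C.image Prod.swap)).trans
          (add_le_add hC (Finset.card_image_le.trans hC))
        rw [div_le_iff₀ (by norm_num)]
        exact_mod_cast this.trans (by norm_num)

end CentralCube

section CornerCube

variable {m : ℕ} {p : ℝ}

def rowDigits (s : Fin m → Bool) : List ℕ := List.ofFn fun k => bif s k then 4 else 0

/-- The rows of level-`m` cubes all of whose base-`5` digits are `0` or `4`; such a row crosses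
`[0,1]` inside `F⁽²⁾`, since every removed cell has its second digit in `{1, 2, 3}`. -/
def rowIndex (s : Fin m → Bool) : ℕ := Nat.ofDigits 5 (rowDigits s) + 1

lemma mem_rowDigits {s : Fin m → Bool} {x : ℕ} (hx : x ∈ rowDigits s) : x = 0 ∨ x = 4 := by
  obtain ⟨k, rfl⟩ := List.mem_ofFn.1 hx
  cases s k <;> simp

lemma rowDigits_lt {s : Fin m → Bool} {x : ℕ} (hx : x ∈ rowDigits s) : x < 5 := by
  rcases mem_rowDigits hx with rfl | rfl <;> norm_num

lemma rowIndex_le (s : Fin m → Bool) : rowIndex s ≤ 5 ^ m := by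
  have := Nat.ofDigits_lt_base_pow_length (by norm_num) fun x => rowDigits_lt (s := s)
  rw [rowDigits, List.length_ofFn] at this
  exact this

lemma rowIndex_injective : Function.Injective (rowIndex (m := m)) := by
  intro s s' h
  have hL := Nat.ofDigits_inj_of_len_eq (by norm_num) (by simp [rowDigits])
    (fun x => rowDigits_lt (s := s)) (fun x => rowDigits_lt (s := s')) (Nat.succ_injective h)
  funext k
  have := congrFun (List.ofFn_injective hL) k
  cases hs : s k <;> cases hs' : s' k <;> simp_all

lemma digit_rowIndex (s : Fin m → Bool) (k : ℕ) :
    digit k (rowIndex s - 1) = 0 ∨ digit k (rowIndex s - 1) = 4 := by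
  rw [rowIndex, add_tsub_cancel_right, digit,
    Nat.ofDigits_div_pow_eq_ofDigits_drop k (by norm_num) _ fun x => rowDigits_lt (s := s),
    Nat.ofDigits_mod_eq_head!]
  cases h : (rowDigits s).drop k with
  | nil => simp
  | cons x t =>
    have hx : x ∈ rowDigits s := List.mem_of_mem_drop (h ▸ List.mem_cons_self)
    rcases mem_rowDigits hx with rfl | rfl <;> simp

lemma isAdmissible_row {x : ℕ} (hx : 1 ≤ x ∧ x ≤ 5 ^ (1 + m)) (s : Fin m → Bool) :
    IsAdmissible (1 + m) ![x, rowIndex s] := by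
  refine ⟨Fin.forall_fin_two.2 ⟨hx, ?_⟩, fun k _ hrem => ?_⟩
  · exact ⟨Nat.le_add_left _ _,
      (rowIndex_le s).trans (Nat.pow_le_pow_right (by norm_num) (by omega))⟩
  · have := digit_rowIndex s k
    simp only [Matrix.cons_val_zero, Matrix.cons_val_one, IsRemovedCell] at hrem this
    omega

lemma Qone_eq (d : ℕ) : Qone d = cube d 1 (fun _ => 1) := by
  ext x
  simp only [Qone, cube, Set.mem_ofPred_eq, Set.mem_Icc]
  norm_num

lemma Qone_mem_QcolOf : Qone 2 ∈ QcolOf 2 1 (Fset 2) :=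
  Qone_eq 2 ▸ cube_mem_QcolOf_Fset (isAdmissible_one_iff.2 ⟨by simp, by simp [IsRemovedCell]⟩)

lemma cube_three_one_mem_GamC : cube 2 1 ![3, 1] ∈ GamC 2 1 (Qone 2) := by
  refine ⟨cube_mem_QcolOf_Fset (isAdmissible_one_iff.2 ⟨?_, by simp [IsRemovedCell]⟩), ?_⟩
  · exact Fin.forall_fin_two.2 (by simp)
  · rintro ⟨-, h⟩
    rw [Qone_eq, cube_inter_cube_nonempty_iff] at h
    simpa using h 0

def pathCube (m : ℕ) (s : Fin m → Bool) (j : ℕ) : Set (Pt 2) :=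
  cube 2 (1 + m) ![5 ^ m + j, rowIndex s]

lemma le_conduct_Qone (hp : 1 ≤ p) (m : ℕ) :
    2 ^ m * ((5 ^ m + 1 : ℕ) : ℝ) ^ (1 - p) / 2 ≤ conduct 2 1 m p {Qone 2} (GamC 2 1 (Qone 2)) := by
  have h5 : 1 ≤ 5 ^ m := Nat.one_le_pow _ _ (by norm_num)
  have h5' : 5 ^ (1 + m) = 5 * 5 ^ m := by ring
  have hrow : ∀ s : Fin m → Bool, 1 ≤ rowIndex s ∧ rowIndex s ≤ 5 ^ m :=
    fun s => ⟨Nat.le_add_left _ _, rowIndex_le s⟩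
  have hmem : ∀ s, ∀ j ≤ 5 ^ m + 1, pathCube m s j ∈ QcolOf 2 (1 + m) (Fset 2) :=
    fun s j hj => cube_mem_QcolOf_Fset (isAdmissible_row ⟨by omega, by omega⟩ s)
  have hadj : ∀ s j, (pathCube m s j ∩ pathCube m s (j + 1)).Nonempty := by
    intro s j
    rw [pathCube, pathCube, cube_inter_cube_nonempty_iff]
    exact Fin.forall_fin_two.2 (by simp; omega)
  have hinj : Function.Injective (Function.uncurry (pathCube m)) := by
    rintro ⟨s, j⟩ ⟨s', j'⟩ h
    have h' := cube_injective _ h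
    have hj : j = j' := by simpa using congrFun h' 0
    have hs : s = s' := rowIndex_injective (by simpa using congrFun h' 1)
    rw [hj, hs]
  have hstart : ∀ s, pathCube m s 0 ∈ Sm 2 1 m {Qone 2} := by
    refine fun s => ⟨hmem s 0 (by omega), _, rfl, ?_⟩
    rw [pathCube, Qone_eq, cube_subset_cube_iff]
    exact Fin.forall_fin_two.2 (by have := hrow s; simp; omega)
  have hend : ∀ s, pathCube m s (5 ^ m + 1) ∈ Sm 2 1 m (GamC 2 1 (Qone 2)) := by
    refine fun s => ⟨hmem s _ le_rfl, _, cube_three_one_mem_GamC, ?_⟩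
    rw [pathCube, cube_subset_cube_iff]
    exact Fin.forall_fin_two.2 (by have := hrow s; simp; omega)
  refine le_conduct (disjoint_Sm_singleton_GamC _) fun f hf₁ hf₂ => ?_
  have := le_energy_of_paths hp (by omega) (pathCube m) hmem hadj hinj
    (fun s => hf₁ _ (hstart s)) (fun s => hf₂ _ (hend s))
  simpa using this

end CornerCube

section Growth

open Filter

lemma one_le_of_forall_mul_rpow_neg_le {σ c B : ℝ} (hσ : 0 < σ) (hc : 0 < c)
    (h : ∀ m : ℕ, c * σ ^ (-(m : ℝ)) ≤ B) : 1 ≤ σ := by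
  by_contra! hlt
  have hlim : Tendsto (fun m : ℕ => c * σ⁻¹ ^ m) atTop atTop :=
    (tendsto_pow_atTop_atTop_of_one_lt ((one_lt_inv₀ hσ).2 hlt)).const_mul_atTop hc
  obtain ⟨m, hm⟩ := (hlim.eventually_gt_atTop B).exists
  exact hm.not_ge (by simpa [Real.rpow_neg hσ.le, Real.rpow_natCast, inv_pow] using h m)

/-- The exponent bound `p < log 10 / log 5` says exactly that `2 · 5^(1-p) > 1`. -/
lemma exists_lt_two_pow_mul_rpow {p : ℝ} (hp1 : 1 ≤ p) (hp2 : p < Real.log 10 / Real.log 5)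
    (C : ℝ) : ∃ m : ℕ, C < 2 ^ m * ((5 ^ m + 1 : ℕ) : ℝ) ^ (1 - p) := by
  set a : ℝ := 5 ^ (1 - p) with ha_def
  have ha : 0 < a := by positivity
  have h2a : 1 < 2 * a := by
    rw [ha_def]
    have h10 : Real.log 10 = Real.log 2 + Real.log 5 := by
      rw [← Real.log_mul] <;> norm_num
    have := (lt_div_iff₀ (Real.log_pos (by norm_num : (1 : ℝ) < 5))).1 hp2
    rw [Real.rpow_def_of_pos (by norm_num), show (2 : ℝ) = Real.exp (Real.log 2) by
      rw [Real.exp_log two_pos], ← Real.exp_add, Real.one_lt_exp_iff]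
    nlinarith
  have hlim : Tendsto (fun m : ℕ => a * (2 * a) ^ m) atTop atTop :=
    (tendsto_pow_atTop_atTop_of_one_lt h2a).const_mul_atTop ha
  obtain ⟨m, hm⟩ := (hlim.eventually_gt_atTop C).exists
  refine ⟨m, hm.trans_le ?_⟩
  have hpow : a * (2 * a) ^ m = 2 ^ m * ((5 : ℝ) ^ (m + 1)) ^ (1 - p) := by
    rw [← Real.rpow_natCast (5 : ℝ), ← Real.rpow_mul (by norm_num), mul_comm _ (1 - p),
      Real.rpow_mul (by norm_num), Real.rpow_natCast, ← ha_def]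
    ring
  rw [hpow]
  gcongr 2 ^ m * ?_
  refine Real.rpow_le_rpow_of_nonpos (by positivity) ?_ (by linarith)
  push_cast
  rw [pow_succ]
  linarith [one_le_pow₀ (by norm_num : (1 : ℝ) ≤ 5) (n := m)]

end Growth

open Filter in
/-- Failure of property (A_p) for `F⁽²⁾` for `1 < p < log 10 / log 5`. -/
theorem statement0 (p : ℝ) (hp1 : 1 < p) (hp2 : p < Real.log 10 / Real.log 5) :
    ¬ ∃ σ c₁ c₂ : ℝ, 0 < σ ∧ 0 < c₁ ∧ 0 < c₂ ∧
      ∀ (n m : ℕ), 1 ≤ n → ∀ Q ∈ QcolOf 2 n (Fset 2),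
        c₁ * σ ^ (-(m : ℝ)) ≤ conduct 2 n m p {Q} (GamC 2 n Q) ∧
        conduct 2 n m p {Q} (GamC 2 n Q) ≤ c₂ * σ ^ (-(m : ℝ)) := by
  rintro ⟨σ, c₁, c₂, hσ, hc₁, hc₂, H⟩
  have hσ1 : 1 ≤ σ := one_le_of_forall_mul_rpow_neg_le hσ hc₁ fun m =>
    (H 1 m le_rfl _ Qtwo_mem_QcolOf).1.trans (conduct_Qtwo_le (by linarith) m)
  obtain ⟨m, hm⟩ := exists_lt_two_pow_mul_rpow hp1.le hp2 (2 * c₂)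
  have hcorner := (le_conduct_Qone hp1.le m).trans (H 1 m le_rfl _ Qone_mem_QcolOf).2
  have hσm : σ ^ (-(m : ℝ)) ≤ 1 := Real.rpow_le_one_of_one_le_of_nonpos hσ1 (by simp)
  nlinarith
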